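/- If a symmetric (0,2)-tensor S on an n-dimensional (n ≥ 3) space satisfies rank(S − α g) = 1 for some scalar α (quasi-Einstein condition), then S² = (κ − (n−2)α) S + α((n−1)α − κ) g, where κ = tr S; in particular S is 'partially Einstein' (S² is a linear combination of S and g). -/
import Mathlib


open Module

variable {V : Type*} [AddCommGroup V] [Module ℝ V]

/-- Kulkarni–Nomizu product of two (0,2)-tensors. -/
def KN (A B : V → V → ℝ) : V → V → V → V → ℝ := fun X1 X2 X3 X4 =>
  A X1 X4 * B X2 X3 + A X2 X3 * B X1 X4 - A X1 X3 * B X2 X4 - A X2 X4 * B X1 X3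

/-- The endomorphism `X ∧_A Y` applied to `Z`. -/
def wedgeEnd (A : V → V → ℝ) (X Y Z : V) : V := A Y Z • X - A X Z • Y

/-- Tachibana tensor `Q(A,T)` of a symmetric (0,2)-tensor `A` and a (0,4)-tensor `T`. -/
def Tach (A : V → V → ℝ) (T : V → V → V → V → ℝ) : V → V → V → V → V → V → ℝ :=
  fun X1 X2 X3 X4 X Y =>
    -(T (wedgeEnd A X Y X1) X2 X3 X4) - T X1 (wedgeEnd A X Y X2) X3 X4
      - T X1 X2 (wedgeEnd A X Y X3) X4 - T X1 X2 X3 (wedgeEnd A X Y X4)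

/-- A rank-one endomorphism `T` satisfies `T ∘ T = (tr T) • T`. -/
theorem rank_one_sq [FiniteDimensional ℝ V] (T : V →ₗ[ℝ] V)
    (hrank : finrank ℝ (LinearMap.range T) = 1) (x : V) :
    T (T x) = (LinearMap.trace ℝ V T) • T x := by
  obtain ⟨v, hv0, hv⟩ := finrank_eq_one_iff'.mp hrank
  have hv0' : (v : V) ≠ 0 := fun h => hv0 (Subtype.ext h)
  have key : ∀ x : V, ∃ c : ℝ, T x = c • (v : V) := by
    intro x
    obtain ⟨c, hc⟩ := hv ⟨T x, LinearMap.mem_range_self T x⟩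
    exact ⟨c, by simpa using congrArg Subtype.val hc.symm⟩
  have huniq : ∀ a b : ℝ, a • (v : V) = b • (v : V) → a = b := by
    intro a b h
    have : (a - b) • (v : V) = 0 := by rw [sub_smul, h, sub_self]
    rcases smul_eq_zero.mp this with h' | h'
    · linarith [sub_eq_zero.mp (by exact_mod_cast h')]
    · exact absurd h' hv0'
  set cf : V → ℝ := fun x => (key x).choose with hcf_def
  have hcf : ∀ x, T x = cf x • (v : V) := fun x => (key x).choose_spec
  have hadd : ∀ x y, cf (x + y) = cf x + cf y := by
    intro x y
    apply huniq
    rw [← hcf, map_add, hcf x, hcf y, add_smul]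
  have hsmul : ∀ (r : ℝ) (x : V), cf (r • x) = r * cf x := by
    intro r x
    apply huniq
    rw [← hcf, map_smul, hcf x, mul_smul, smul_smul]
  let C : V →ₗ[ℝ] ℝ :=
    { toFun := cf, map_add' := hadd, map_smul' := hsmul }
  have hT : T = dualTensorHom ℝ V V (C ⊗ₜ[ℝ] (v : V)) := by
    ext y
    simp [dualTensorHom_apply, C, ← hcf]
  have htr : LinearMap.trace ℝ V T = cf (v : V) := by
    conv_lhs => rw [hT]
    rw [LinearMap.trace_eq_contract_apply, contractLeft_apply]
    rfl
  rw [htr, hcf x, map_smul, hcf (v : V), smul_smul, smul_smul, mul_comm, ← smul_smul, ← hcf x]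

/-- if a symmetric (0,2)-tensor `S` satisfies the quasi-Einstein
condition `rank (S − α g) = 1`, then `S² = (κ − (n−2)α) S + α((n−1)α − κ) g`
with `κ = tr S`; in particular `S` is partially Einstein. -/
theorem statement_19 [FiniteDimensional ℝ V] (hn : 3 ≤ finrank ℝ V)
    (g : LinearMap.BilinForm ℝ V) (hgs : ∀ X Y, g X Y = g Y X)
    (hgn : g.Nondegenerate)
    (s : V →ₗ[ℝ] V) (hs : ∀ X Y, g (s X) Y = g (s Y) X) (α : ℝ)
    (hrank : finrank ℝ (LinearMap.range (s - α • LinearMap.id)) = 1)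
    (X Y : V) :
    g (s (s X)) Y
      = (LinearMap.trace ℝ V s - ((finrank ℝ V : ℝ) - 2) * α) * g (s X) Y
        + α * (((finrank ℝ V : ℝ) - 1) * α - LinearMap.trace ℝ V s) * g X Y := by
  set T : V →ₗ[ℝ] V := s - α • LinearMap.id with hT_def
  set n : ℝ := (finrank ℝ V : ℝ)
  set κ : ℝ := LinearMap.trace ℝ V s with hκ_def
  have hTx : ∀ x : V, T x = s x - α • x := by
    intro x; simp [hT_def]
  have htrT : LinearMap.trace ℝ V T = κ - n * α := by
    simp [hT_def, LinearMap.trace_id, hκ_def, n, mul_comm]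
  have hTT := rank_one_sq T hrank
  -- key endomorphism identity
  have key : s (s X) = (κ - (n - 2) * α) • s X + (α * ((n - 1) * α - κ)) • X := by
    have h1 : s (s X) = T (s X) + α • s X := by rw [hTx]; abel
    have h2 : T (s X) = T (T X) + α • T X := by
      have : s X = T X + α • X := by rw [hTx]; abel
      rw [this, map_add, map_smul]
    rw [h1, h2, hTT X, htrT, hTx X]
    module
  rw [key]
  simp [map_add, map_smul]
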